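/- Let PAR(x,P) = Q·(exp(−(k_{go} + k_{gp} (cP)^{l_g}) x) + exp(−(k_{ro} + k_{rp} (cP)^{l_r}) x)) with Q ≥ 0, and L_I(x,P) = 1 − exp(−PAR(x,P)/k_{par}). Then for all x ∈ [0,L] and P, P̂ ≥ 0, |P·L_I(x,P) − P̂·L_I(x,P̂)| ≤ K_I(P, P̂)|P − P̂|, where K_I(P,P̂) = 1 + (Q·L/k_{par})·(k_{gp} l_g c^{l_g} max(P,P̂)^{l_g} + k_{rp} l_r c^{l_r} max(P,P̂)^{l_r}). -/

import Mathlib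

/-!
Write `L_I = 1 - exp u` with `u = -PAR / k_par ≤ 0`. For `P̂ ≤ P`,
`P L_I(P) - P̂ L_I(P̂) = (P - P̂) L_I(P) + P̂ (L_I(P) - L_I(P̂))`, where `0 ≤ L_I ≤ 1` and, `exp` being
1-Lipschitz on `(-∞, 0]`, the second term is controlled by `P̂ |PAR(P) - PAR(P̂)|`. The same Lipschitz
bound reduces each exponential of `PAR` to `P̂ (P ^ l - P̂ ^ l)`, which is at most `l P ^ l (P - P̂)`
by Bernoulli's inequality; finally `x ≤ L`.
-/

open Set Real

theorem mul_rpow_sub_rpow_le {a b l : ℝ} (ha : 0 ≤ a) (hab : a ≤ b) (hl : 0 ≤ l) :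
    a * (b ^ l - a ^ l) ≤ l * b ^ l * (b - a) := by
  rcases (ha.trans hab).eq_or_lt with rfl | hb
  · simp [le_antisymm hab ha]
  have hpow : ∀ {y : ℝ}, 0 ≤ y → y ^ (1 + l) = y * y ^ l := fun hy => by
    rw [rpow_add' hy (by linarith), rpow_one]
  -- Bernoulli's inequality for `t ↦ t ^ (1 + l)` at `t = a / b`, rescaled by `b ^ (1 + l)`
  have bernoulli := one_add_mul_self_le_rpow_one_add (s := a / b - 1)
    (by linarith [div_nonneg ha hb.le]) (p := 1 + l) (by linarith)
  rw [add_sub_cancel, div_rpow ha hb.le, le_div_iff₀ (by positivity), hpow ha, hpow hb.le]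
    at bernoulli
  have key : b * b ^ l * (1 + (1 + l) * (a / b - 1)) = b ^ l * (a + l * (a - b)) := by
    field_simp; ring
  nlinarith [rpow_nonneg hb.le l]

theorem abs_exp_sub_exp_le_of_nonpos {u v : ℝ} (hu : u ≤ 0) (hv : v ≤ 0) :
    |exp u - exp v| ≤ |u - v| := by
  wlog h : v ≤ u generalizing u v
  · rw [abs_sub_comm, abs_sub_comm u]; exact this hv hu (le_of_not_ge h)
  have hexp : exp u - exp v = exp u * (1 - exp (v - u)) := by
    rw [mul_sub, mul_one, ← exp_add, add_sub_cancel]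
  rw [abs_of_nonneg (sub_nonneg.2 (exp_le_exp.2 h)), abs_of_nonneg (sub_nonneg.2 h), hexp]
  have hexp_le : exp u ≤ 1 := exp_le_one_iff.2 hu
  have hfactor : 0 ≤ 1 - exp (v - u) := sub_nonneg.2 (exp_le_one_iff.2 (by linarith))
  nlinarith [add_one_le_exp (v - u)]

theorem abs_mul_one_sub_exp_sub_le {a b u v : ℝ} (ha : 0 ≤ a) (hab : a ≤ b)
    (hu : u ≤ 0) (hv : v ≤ 0) :
    |b * (1 - exp u) - a * (1 - exp v)| ≤ (b - a) + a * |u - v| := by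
  have hsplit : b * (1 - exp u) - a * (1 - exp v) =
      (b - a) * (1 - exp u) + a * (exp v - exp u) := by ring
  have hleft : |(b - a) * (1 - exp u)| ≤ b - a := by
    rw [abs_mul, abs_of_nonneg (sub_nonneg.2 hab),
      abs_of_nonneg (sub_nonneg.2 (exp_le_one_iff.2 hu))]
    exact mul_le_of_le_one_right (sub_nonneg.2 hab) (by linarith [exp_pos u])
  have hright : |a * (exp v - exp u)| ≤ a * |u - v| := by
    rw [abs_mul, abs_of_nonneg ha, abs_sub_comm u]
    exact mul_le_mul_of_nonneg_left (abs_exp_sub_exp_le_of_nonpos hv hu) ha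
  rw [hsplit]
  exact (abs_add_le _ _).trans (add_le_add hleft hright)

theorem mul_abs_exp_decay_sub_le {k m l c x a b : ℝ} (hk : 0 ≤ k) (hm : 0 ≤ m) (hl : 0 ≤ l)
    (hc : 0 ≤ c) (hx : 0 ≤ x) (ha : 0 ≤ a) (hab : a ≤ b) :
    a * |exp (-(k + m * (c * b) ^ l) * x) - exp (-(k + m * (c * a) ^ l) * x)| ≤
      x * (m * l * c ^ l * b ^ l) * (b - a) := by
  have hb := ha.trans hab
  have hexp := abs_exp_sub_exp_le_of_nonpos (u := -(k + m * (c * b) ^ l) * x)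
    (v := -(k + m * (c * a) ^ l) * x) (by rw [neg_mul, neg_nonpos]; positivity)
    (by rw [neg_mul, neg_nonpos]; positivity)
  have hdiff : |-(k + m * (c * b) ^ l) * x - -(k + m * (c * a) ^ l) * x| =
      x * m * c ^ l * (b ^ l - a ^ l) := by
    rw [mul_rpow hc hb, mul_rpow hc ha, abs_sub_comm, ← abs_of_nonneg (mul_nonneg
      (by positivity : 0 ≤ x * m * c ^ l) (sub_nonneg.2 (rpow_le_rpow ha hab hl)))]
    congr 1; ring
  calc a * |exp (-(k + m * (c * b) ^ l) * x) - exp (-(k + m * (c * a) ^ l) * x)|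
      ≤ a * (x * m * c ^ l * (b ^ l - a ^ l)) := mul_le_mul_of_nonneg_left (hdiff ▸ hexp) ha
    _ = x * m * c ^ l * (a * (b ^ l - a ^ l)) := by ring
    _ ≤ x * m * c ^ l * (l * b ^ l * (b - a)) :=
        mul_le_mul_of_nonneg_left (mul_rpow_sub_rpow_le ha hab hl) (by positivity)
    _ = x * (m * l * c ^ l * b ^ l) * (b - a) := by ring

theorem stmt_11_general (Q L k_par k_go k_ro k_gp k_rp l_g l_r c : ℝ)
    (hQ : 0 ≤ Q) (hkpar : 0 < k_par)
    (hkgo : 0 < k_go) (hkro : 0 < k_ro) (hkgp : 0 < k_gp) (hkrp : 0 < k_rp)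
    (hlg0 : 0 < l_g) (hlr0 : 0 < l_r) (hc : 0 < c) :
    ∀ x ∈ Icc (0 : ℝ) L, ∀ P Phat : ℝ, 0 ≤ P → 0 ≤ Phat →
      |P * (1 - Real.exp (-(Q * (Real.exp (-(k_go + k_gp * (c * P) ^ l_g) * x)
            + Real.exp (-(k_ro + k_rp * (c * P) ^ l_r) * x))) / k_par))
        - Phat * (1 - Real.exp (-(Q * (Real.exp (-(k_go + k_gp * (c * Phat) ^ l_g) * x)
            + Real.exp (-(k_ro + k_rp * (c * Phat) ^ l_r) * x))) / k_par))| ≤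
      (1 + Q * L / k_par *
          (k_gp * l_g * c ^ l_g * (max P Phat) ^ l_g
            + k_rp * l_r * c ^ l_r * (max P Phat) ^ l_r)) * |P - Phat| := by
  intro x ⟨hx0, hxL⟩ P Phat hP hPhat
  wlog hle : Phat ≤ P generalizing P Phat
  · rw [abs_sub_comm, max_comm, abs_sub_comm P]
    exact this Phat P hPhat hP (le_of_not_ge hle)
  set gP := exp (-(k_go + k_gp * (c * P) ^ l_g) * x)
  set rP := exp (-(k_ro + k_rp * (c * P) ^ l_r) * x)
  set gPhat := exp (-(k_go + k_gp * (c * Phat) ^ l_g) * x)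
  set rPhat := exp (-(k_ro + k_rp * (c * Phat) ^ l_r) * x)
  have hdecay_g := mul_abs_exp_decay_sub_le hkgo.le hkgp.le hlg0.le hc.le hx0 hPhat hle
  have hdecay_r := mul_abs_exp_decay_sub_le hkro.le hkrp.le hlr0.le hc.le hx0 hPhat hle
  have hpar : -(Q * (gP + rP)) / k_par - -(Q * (gPhat + rPhat)) / k_par =
      -(Q / k_par) * ((gP - gPhat) + (rP - rPhat)) := by ring
  rw [max_eq_left hle, abs_of_nonneg (sub_nonneg.2 hle)]
  calc _ ≤ (P - Phat) + Phat * |-(Q * (gP + rP)) / k_par - -(Q * (gPhat + rPhat)) / k_par| :=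
        abs_mul_one_sub_exp_sub_le hPhat hle (by rw [neg_div, neg_nonpos]; positivity)
          (by rw [neg_div, neg_nonpos]; positivity)
    _ ≤ (P - Phat) + Q / k_par * (Phat * |gP - gPhat| + Phat * |rP - rPhat|) := by
        rw [hpar, abs_mul, abs_neg, abs_of_nonneg (by positivity), ← mul_add, mul_left_comm]
        gcongr
        exact abs_add_le _ _
    _ ≤ (P - Phat) + Q / k_par * (x * (k_gp * l_g * c ^ l_g * P ^ l_g) * (P - Phat)
          + x * (k_rp * l_r * c ^ l_r * P ^ l_r) * (P - Phat)) := by gcongr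
    _ ≤ (P - Phat) + Q / k_par * (L * (k_gp * l_g * c ^ l_g * P ^ l_g) * (P - Phat)
          + L * (k_rp * l_r * c ^ l_r * P ^ l_r) * (P - Phat)) := by gcongr
    _ = _ := by ring

theorem stmt_11 (Q L k_par k_go k_ro k_gp k_rp l_g l_r c : ℝ)
    (hQ : 0 ≤ Q) (hL : 0 < L) (hkpar : 0 < k_par)
    (hkgo : 0 < k_go) (hkro : 0 < k_ro) (hkgp : 0 < k_gp) (hkrp : 0 < k_rp)
    (hlg0 : 0 < l_g) (hlg1 : l_g < 1) (hlr0 : 0 < l_r) (hlr1 : l_r < 1) (hc : 0 < c) :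
    ∀ x ∈ Icc (0 : ℝ) L, ∀ P Phat : ℝ, 0 ≤ P → 0 ≤ Phat →
      |P * (1 - Real.exp (-(Q * (Real.exp (-(k_go + k_gp * (c * P) ^ l_g) * x)
            + Real.exp (-(k_ro + k_rp * (c * P) ^ l_r) * x))) / k_par))
        - Phat * (1 - Real.exp (-(Q * (Real.exp (-(k_go + k_gp * (c * Phat) ^ l_g) * x)
            + Real.exp (-(k_ro + k_rp * (c * Phat) ^ l_r) * x))) / k_par))| ≤
      (1 + Q * L / k_par *
          (k_gp * l_g * c ^ l_g * (max P Phat) ^ l_g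
            + k_rp * l_r * c ^ l_r * (max P Phat) ^ l_r)) * |P - Phat| :=
  stmt_11_general Q L k_par k_go k_ro k_gp k_rp l_g l_r c hQ hkpar hkgo hkro hkgp hkrp hlg0 hlr0 hc
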